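/- Let P* = v_0…v_k be a rainbow path in a properly edge-colored graph with colors c_i = c(v_{i-1}v_i). Suppose v_0 v_i ∈ E(G) with c(v_0 v_i) = c_j for some 1 ≤ j < i, and v_k v_j ∈ E(G) with c(v_k v_j) ∉ {c_1,…,c_k}. Then v_{j+1} v_{j+2} … v_i v_0 v_1 … v_j v_k v_{k-1} … v_{i+1} is a rainbow path of length k on vertex set {v_0,…,v_k} with terminal vertex v_{i+1}. -/

import Mathlib

/-!
Cut `p` at its edges `v_j v_{j+1}` and `v_i v_{i+1}` into `P₁ = v₀ … v_j`, `P₂ = v_{j+1} … v_i`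
and `P₃ = v_{i+1} … v_k`, and reassemble them as `P₂, v_i v₀, P₁, v_j v_k, P₃⁻¹`. The vertex
list is only permuted. In the colour list, `c(v_i v_{i+1})` is dropped, `c(v_j v_{j+1})` is
replaced by the equal `c(v₀ v_i)`, and the fresh colour `c(v_k v_j)` is added, so it stays
duplicate-free.
-/

open SimpleGraph

def ProperEdgeColoring {V : Type*} (G : SimpleGraph V) (c : Sym2 V → ℕ) : Prop :=
  ∀ ⦃u v w : V⦄, G.Adj u v → G.Adj u w → v ≠ w → c s(u, v) ≠ c s(u, w)

namespace SimpleGraph.Walk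

variable {V : Type*} {G : SimpleGraph V}

theorem exists_eq_append_cons_append_cons {u v : V} (p : G.Walk u v) {i j : ℕ} (hji : j < i)
    (hi : i < p.length) :
    ∃ (P₁ : G.Walk u (p.getVert j)) (P₂ : G.Walk (p.getVert (j + 1)) (p.getVert i))
      (P₃ : G.Walk (p.getVert (i + 1)) v),
      p = P₁.append (cons (p.adj_getVert_succ (hji.trans hi))
        (P₂.append (cons (p.adj_getVert_succ hi) P₃))) := by
  refine ⟨((p.take i).take j).copy rfl (by simp [hji.le]),
    ((p.take i).drop (j + 1)).copy (by simp [hji]) (by simp), p.drop (i + 1), ext_support ?_⟩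
  simp only [support_append, support_copy, support_take, support_cons, List.tail_cons,
    drop_support_eq_support_drop_min, take_length,
    Nat.min_eq_left hi.le, Nat.min_eq_left hji, Nat.min_eq_left (show i + 1 ≤ p.length from hi)]
  rw [← List.append_assoc, List.take_append_drop, List.take_append_drop]

variable {x₀ y₁ x₂ y₂ x₃ y₃ : V}

def reroute (P₁ : G.Walk x₀ y₁) (P₂ : G.Walk x₂ y₂) (P₃ : G.Walk x₃ y₃)
    (h₀₂ : G.Adj x₀ y₂) (h₃₁ : G.Adj y₃ y₁) : G.Walk x₂ x₃ :=
  P₂.append (cons h₀₂.symm (P₁.append (cons h₃₁.symm P₃.reverse)))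

variable {p : G.Walk x₀ y₃} {P₁ : G.Walk x₀ y₁} {P₂ : G.Walk x₂ y₂} {P₃ : G.Walk x₃ y₃}
  {h₁₂ : G.Adj y₁ x₂} {h₂₃ : G.Adj y₂ x₃} (h₀₂ : G.Adj x₀ y₂) (h₃₁ : G.Adj y₃ y₁)

theorem length_reroute (hsplit : p = P₁.append (cons h₁₂ (P₂.append (cons h₂₃ P₃)))) :
    (reroute P₁ P₂ P₃ h₀₂ h₃₁).length = p.length := by
  subst hsplit
  simp only [reroute, length_append, length_cons, length_reverse]
  omega

theorem support_reroute_perm (hsplit : p = P₁.append (cons h₁₂ (P₂.append (cons h₂₃ P₃)))) :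
    (reroute P₁ P₂ P₃ h₀₂ h₃₁).support.Perm p.support := by
  subst hsplit
  simp only [reroute, support_append, support_cons, List.tail_cons, support_reverse]
  exact (List.perm_append_comm_assoc _ _ _).trans
    (((List.reverse_perm _).append_left _).append_left _)

theorem nodup_map_edges_reroute {α : Type*} {c : Sym2 V → α}
    (hsplit : p = P₁.append (cons h₁₂ (P₂.append (cons h₂₃ P₃))))
    (hrb : (p.edges.map c).Nodup) (hcol : c s(x₀, y₂) = c s(y₁, x₂))
    (hnew : c s(y₃, y₁) ∉ p.edges.map c) :
    ((reroute P₁ P₂ P₃ h₀₂ h₃₁).edges.map c).Nodup := by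
  classical
  subst hsplit
  rw [Sym2.eq_swap] at hcol hnew
  simp only [reroute, edges_append, edges_cons, edges_reverse, List.map_append, List.map_cons,
    List.map_reverse, hcol] at hrb hnew ⊢
  set L := c s(y₁, x₂) :: (P₁.edges.map c ++ P₂.edges.map c ++ P₃.edges.map c)
  have hold : (P₁.edges.map c ++ c s(y₁, x₂) ::
      (P₂.edges.map c ++ c s(y₂, x₃) :: P₃.edges.map c)).Perm (c s(y₂, x₃) :: L) :=
    List.perm_iff_count.2 fun x => by simp [L, List.count_append, List.count_cons]; omega
  have hnew' : (P₂.edges.map c ++ c s(y₁, x₂) :: (P₁.edges.map c ++ c s(y₁, y₃) ::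
      (P₃.edges.map c).reverse)).Perm (c s(y₁, y₃) :: L) :=
    List.perm_iff_count.2 fun x => by
      simp [L, List.count_append, List.count_cons, List.count_reverse]; omega
  have hL : L.Nodup := (List.nodup_cons.1 (hold.nodup_iff.1 hrb)).2
  exact hnew'.nodup_iff.2 (List.nodup_cons.2 ⟨fun h => hnew (hold.mem_iff.2 (.tail _ h)), hL⟩)

end SimpleGraph.Walk

theorem nice_edge_terminal_lt_general {V : Type*} [DecidableEq V]
    (G : SimpleGraph V) (c : Sym2 V → ℕ) (k : ℕ)
    (v₀ vₖ : V) (p : G.Walk v₀ vₖ) (hp : p.IsPath) (hlen : p.length = k)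
    (hrb : (p.edges.map c).Nodup)
    (i j : ℕ) (hji : j < i) (hik : i ≤ k - 1)
    (hadj : G.Adj v₀ (p.getVert i))
    (hcol : c s(v₀, p.getVert i) = c s(p.getVert j, p.getVert (j + 1)))
    (hadj' : G.Adj vₖ (p.getVert j))
    (hnew : c s(vₖ, p.getVert j) ∉ p.edges.map c) :
    ∃ q : G.Walk (p.getVert (j + 1)) (p.getVert (i + 1)),
      q.IsPath ∧ q.length = k ∧ q.support.toFinset = p.support.toFinset ∧
      (q.edges.map c).Nodup := by
  obtain ⟨P₁, P₂, P₃, hsplit⟩ := p.exists_eq_append_cons_append_cons hji (by omega)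
  have hperm := Walk.support_reroute_perm hadj hadj' hsplit
  refine ⟨Walk.reroute P₁ P₂ P₃ hadj hadj', ?_, ?_, List.toFinset_eq_of_perm _ _ hperm, ?_⟩
  · exact Walk.isPath_def _ |>.2 (hperm.nodup_iff.2 hp.support_nodup)
  · rw [Walk.length_reroute hadj hadj' hsplit, hlen]
  · exact Walk.nodup_map_edges_reroute hadj hadj' hsplit hrb hcol hnew

/-- Claim `nice_edges`, case `j < i`. Let `p = v_0 … v_k` be
a rainbow path in a properly edge-colored graph. Suppose `v_0 v_i ∈ E(G)` with
`c(v_0 v_i) = c_j` for some `1 ≤ j < i`, and `v_k v_j ∈ E(G)` with `c(v_k v_j)`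
not among the colors of `p`. Then
`v_{j+1} v_{j+2} … v_i v_0 v_1 … v_j v_k v_{k-1} … v_{i+1}` is a rainbow path of
length `k` on the vertex set `{v_0,…,v_k}`, i.e. there is a rainbow path of
length `k` on that vertex set with terminal vertices `v_{j+1}` and `v_{i+1}`. -/
theorem nice_edge_terminal_lt {V : Type*} [DecidableEq V]
    (G : SimpleGraph V) (c : Sym2 V → ℕ) (k : ℕ)
    (hproper : ProperEdgeColoring G c)
    (v₀ vₖ : V) (p : G.Walk v₀ vₖ) (hp : p.IsPath) (hlen : p.length = k)
    (hrb : (p.edges.map c).Nodup)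
    (i j : ℕ) (hj : 1 ≤ j) (hji : j < i) (hik : i ≤ k - 1)
    (hadj : G.Adj v₀ (p.getVert i))
    (hcol : c s(v₀, p.getVert i) = c s(p.getVert j, p.getVert (j + 1)))
    (hadj' : G.Adj vₖ (p.getVert j))
    (hnew : c s(vₖ, p.getVert j) ∉ p.edges.map c) :
    ∃ q : G.Walk (p.getVert (j + 1)) (p.getVert (i + 1)),
      q.IsPath ∧ q.length = k ∧ q.support.toFinset = p.support.toFinset ∧
      (q.edges.map c).Nodup :=
  nice_edge_terminal_lt_general G c k v₀ vₖ p hp hlen hrb i j hji hik hadj hcol hadj' hnew
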